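/- There exists n₀ = n₀(k,t) such that for all n ≥ n₀, every t-intersecting family F of k-multisets of [n] satisfies |F| ≤ binomial(n+k−t−1, k−t). -/

import Mathlib

/-!
If the members of `F` have a common lower bound `T` with `|T| ≥ t`, then `B ↦ B - T` embeds `F`
into the `(k - t)`-multisets, of which there are `C(n + k - t - 1, k - t)`.

Otherwise pick a member `A` and, for each point of its support, a member minimising that
coordinate: these at most `k + 1` members `G` have the same lower bounds as `F`. Every `B ∈ F`
puts mass `> t` on the union `S` of the supports of `G`, a set of at most `k (k + 1)` points:
if not, `t`-intersection with each `A ∈ G` forces `B` restricted to `S` below every member of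
`G`, so it is a common lower bound of size `≥ t`. Hence `B` is determined by its restriction
to `S` (at most `(k + 1) ^ |S|` choices) and a multiset of size `< k - t` off `S`, so
`|F| ≤ (k + 1) ^ (k (k + 1)) C(n + k - t - 2, k - t - 1)`, which is at most
`C(n + k - t - 1, k - t)` as soon as `n ≥ k (k + 1) ^ (k (k + 1))`.
-/
open Finset

theorem Nat.choose_add_sub_one_le_choose_add_sub_one {N m m' : ℕ} (hN : 0 < N) (h : m ≤ m') :
    (N + m - 1).choose m ≤ (N + m' - 1).choose m' := by
  have hsymm (j : ℕ) : (N + j - 1).choose j = (N - 1 + j).choose (N - 1) := by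
    rw [show N + j - 1 = N - 1 + j by omega, Nat.choose_symm_add]
  rw [hsymm, hsymm]
  exact Nat.choose_le_choose _ (by omega)

theorem Nat.mul_choose_le_choose_succ {c n j : ℕ} (h : c * (j + 1) ≤ n) :
    c * (n + j).choose j ≤ (n + j).choose (j + 1) := by
  -- `C(n + j, j + 1) / C(n + j, j) = n / (j + 1)`
  have hratio := Nat.choose_succ_right_eq (n + j) j
  rw [Nat.add_sub_cancel] at hratio
  refine Nat.le_of_mul_le_mul_right ?_ j.succ_pos
  calc c * (n + j).choose j * (j + 1) = (n + j).choose j * (c * (j + 1)) := by ring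
    _ ≤ (n + j).choose j * n := Nat.mul_le_mul_left _ h
    _ = (n + j).choose (j + 1) * (j + 1) := hratio.symm

variable {ι : Type*} [Fintype ι]

theorem card_piAntidiag_univ [DecidableEq ι] (m : ℕ) :
    #(piAntidiag (univ : Finset ι) m) = (Fintype.card ι + m - 1).choose m := by
  rw [← Sym.card_sym_eq_choose]
  exact card_eq_of_equiv_fintype <|
    (Equiv.subtypeEquivRight fun f ↦ by simp).trans (Sym.equivNatSumOfFintype ι m).symm

theorem card_le_choose_of_sum_le [DecidableEq ι] {F : Finset (ι → ℕ)} {m : ℕ}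
    (hF : ∀ B ∈ F, ∑ i, B i ≤ m) :
    #F ≤ (Fintype.card ι + m).choose m := by
  -- a slack coordinate `none` brings every sum up to exactly `m`
  let pad (B : ι → ℕ) : Option ι → ℕ := fun o ↦ o.elim (m - ∑ i, B i) B
  calc #F ≤ #(piAntidiag (univ : Finset (Option ι)) m) := by
        refine card_le_card_of_injOn pad (fun B hB ↦ ?_) fun B _ B' _ h ↦ ?_
        · have := hF B hB
          rw [mem_coe, mem_piAntidiag, Fintype.sum_option]
          simp only [pad, Option.elim, mem_univ, implies_true, and_true]
          omega
        · exact funext fun i ↦ congrFun h (some i)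
    _ = (Fintype.card ι + m).choose m := by
        rw [card_piAntidiag_univ, Fintype.card_option, Nat.add_right_comm, Nat.add_sub_cancel]

theorem card_le_pow_mul_choose [DecidableEq ι] (S : Finset ι) {F : Finset (ι → ℕ)} {b m : ℕ}
    (hle : ∀ B ∈ F, ∀ i, B i ≤ b) (hcompl : ∀ B ∈ F, ∑ i ∈ Sᶜ, B i ≤ m) :
    #F ≤ (b + 1) ^ #S * (Fintype.card ι + m).choose m := by
  let onS (B : ι → ℕ) : S → ℕ := fun i ↦ B i
  let offS (B : ι → ℕ) : ↥Sᶜ → ℕ := fun i ↦ B i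
  have hoff : #(F.image offS) ≤ (Fintype.card ι + m).choose m := by
    refine (card_le_choose_of_sum_le ?_).trans (Nat.choose_le_choose _ ?_)
    · simp only [mem_image, forall_exists_index, and_imp, forall_apply_eq_imp_iff₂]
      intro B hB
      rw [sum_coe_sort Sᶜ B]
      exact hcompl B hB
    · simp
  calc #F ≤ #(Fintype.piFinset (fun _ : S ↦ range (b + 1)) ×ˢ F.image offS) := by
        refine card_le_card_of_injOn (fun B ↦ (onS B, offS B)) (fun B hB ↦ ?_) ?_
        · rw [mem_coe, mem_product, Fintype.mem_piFinset]
          exact ⟨fun i ↦ mem_range_succ_iff.2 (hle B hB i), mem_image_of_mem offS hB⟩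
        · intro B _ B' _ h
          simp only [Prod.mk.injEq, onS, offS, funext_iff, Subtype.forall, mem_compl] at h
          exact funext fun i ↦ if hi : i ∈ S then h.1 i hi else h.2 i hi
    _ ≤ (b + 1) ^ #S * (Fintype.card ι + m).choose m := by
        rw [card_product, Fintype.card_piFinset, prod_const, card_range, card_univ,
          Fintype.card_coe]
        exact Nat.mul_le_mul_left _ hoff

theorem card_le_pow_mul_choose_of_lt_sum [DecidableEq ι] {F : Finset (ι → ℕ)} {S : Finset ι}
    {k t : ℕ} (hsum : ∀ B ∈ F, ∑ i, B i = k) (hS : ∀ B ∈ F, t < ∑ i ∈ S, B i) :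
    #F ≤ (k + 1) ^ #S * (Fintype.card ι + (k - t - 1)).choose (k - t - 1) := by
  refine card_le_pow_mul_choose S (fun B hB i ↦ ?_) fun B hB ↦ ?_
  · exact hsum B hB ▸ single_le_sum (fun _ _ ↦ Nat.zero_le _) (mem_univ i)
  · have := sum_add_sum_compl S B
    have := hsum B hB
    have := hS B hB
    omega

theorem card_le_choose_of_mem_lowerBounds [DecidableEq ι] (hι : 0 < Fintype.card ι)
    {F : Finset (ι → ℕ)} {k t : ℕ} {T : ι → ℕ} (htk : t ≤ k) (hsum : ∀ B ∈ F, ∑ i, B i = k)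
    (hT : T ∈ lowerBounds (F : Set (ι → ℕ))) (htT : t ≤ ∑ i, T i) :
    #F ≤ (Fintype.card ι + k - t - 1).choose (k - t) := by
  calc #F ≤ #(piAntidiag (univ : Finset ι) (k - ∑ i, T i)) := by
        refine card_le_card_of_injOn (· - T) (fun B hB ↦ ?_) fun B hB B' hB' h ↦ ?_
        · rw [mem_coe, mem_piAntidiag]
          refine ⟨?_, fun _ _ ↦ mem_univ _⟩
          rw [← hsum B hB, ← sum_tsub_distrib _ fun i _ ↦ hT hB i]
          rfl
        · exact (tsub_left_inj (hT hB) (hT hB')).1 h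
    _ = (Fintype.card ι + (k - ∑ i, T i) - 1).choose (k - ∑ i, T i) := card_piAntidiag_univ _
    _ ≤ (Fintype.card ι + (k - t) - 1).choose (k - t) :=
        Nat.choose_add_sub_one_le_choose_add_sub_one hι (by omega)
    _ = (Fintype.card ι + k - t - 1).choose (k - t) := by rw [Nat.add_sub_assoc htk]

theorem card_filter_ne_zero_le_sum (B : ι → ℕ) : #{i | B i ≠ 0} ≤ ∑ i, B i :=
  calc #{i | B i ≠ 0} = #{i | B i ≠ 0} • 1 := (mul_one _).symm
    _ ≤ ∑ i ∈ {i | B i ≠ 0}, B i :=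
        card_nsmul_le_sum _ _ _ fun _ hi ↦ Nat.one_le_iff_ne_zero.2 (mem_filter.1 hi).2
    _ ≤ ∑ i, B i := sum_le_sum_of_subset (subset_univ _)

theorem le_of_sum_le_sum_min {A C : ι → ℕ} (h : ∑ i, C i ≤ ∑ i, min (A i) (C i)) : C ≤ A := by
  have hmin : ∀ i ∈ univ, min (A i) (C i) ≤ C i := fun i _ ↦ min_le_right _ _
  have heq := (sum_eq_sum_iff_of_le hmin).1 (le_antisymm (sum_le_sum hmin) h)
  exact fun i ↦ min_eq_right_iff.1 (heq i (mem_univ i))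

theorem exists_subset_card_le_lowerBounds_subset {F : Finset (ι → ℕ)} {A : ι → ℕ} (hA : A ∈ F) :
    ∃ G ⊆ F, A ∈ G ∧ #G ≤ #{i | A i ≠ 0} + 1 ∧
      lowerBounds (G : Set (ι → ℕ)) ⊆ lowerBounds F := by
  classical
  choose b hbF hbmin using fun i : ι ↦ F.exists_min_image (· i) ⟨A, hA⟩
  let G := insert A (({i | A i ≠ 0} : Finset ι).image b)
  refine ⟨G, insert_subset hA (image_subset_iff.2 fun i _ ↦ hbF i), mem_insert_self _ _,
    (card_insert_le _ _).trans (Nat.add_le_add_right card_image_le 1), fun T hT B hB i ↦ ?_⟩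
  by_cases hi : A i = 0
  · exact (hT (mem_insert_self A _) i).trans (hi ▸ Nat.zero_le _)
  · have hbG : b i ∈ G := mem_insert_of_mem (mem_image_of_mem b (mem_filter.2 ⟨mem_univ i, hi⟩))
    exact (hT hbG i).trans (hbmin i B hB)

theorem lt_sum_of_lowerBounds_sum_lt {F G : Finset (ι → ℕ)} {S : Finset ι} {t : ℕ}
    (hint : ∀ A ∈ F, ∀ B ∈ F, t ≤ ∑ i, min (A i) (B i)) (hGF : G ⊆ F) (hG : G.Nonempty)
    (hS : ∀ A ∈ G, ∀ i ∉ S, A i = 0) (hGt : ∀ T ∈ lowerBounds (G : Set (ι → ℕ)), ∑ i, T i < t)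
    {B : ι → ℕ} (hB : B ∈ F) : t < ∑ i ∈ S, B i := by
  classical
  let BS : ι → ℕ := fun i ↦ if i ∈ S then B i else 0
  have hBS : ∑ i, BS i = ∑ i ∈ S, B i := by simp [BS]
  have hmeet : ∀ A ∈ G, t ≤ ∑ i, min (A i) (BS i) := fun A hA ↦ by
    convert hint A (hGF hA) B hB using 2 with i
    by_cases hi : i ∈ S <;> simp [BS, hi, hS A hA]
  by_contra! hle
  have hlow : BS ∈ lowerBounds (G : Set (ι → ℕ)) := fun A hA ↦
    le_of_sum_le_sum_min ((hBS.trans_le hle).trans (hmeet A hA))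
  obtain ⟨A, hA⟩ := hG
  have hge : t ≤ ∑ i, BS i := (hmeet A hA).trans (sum_le_sum fun i _ ↦ min_le_right _ _)
  exact (hGt BS hlow).not_ge hge

theorem exists_card_le_forall_lt_sum {F : Finset (ι → ℕ)} {k t : ℕ}
    (hsum : ∀ A ∈ F, ∑ i, A i = k) (hint : ∀ A ∈ F, ∀ B ∈ F, t ≤ ∑ i, min (A i) (B i))
    (hF : F.Nonempty) (hFt : ∀ T ∈ lowerBounds (F : Set (ι → ℕ)), ∑ i, T i < t) :
    ∃ S : Finset ι, #S ≤ k * (k + 1) ∧ ∀ B ∈ F, t < ∑ i ∈ S, B i := by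
  classical
  obtain ⟨A, hA⟩ := hF
  obtain ⟨G, hGF, hAG, hGcard, hGlow⟩ := exists_subset_card_le_lowerBounds_subset hA
  have hsupp : ∀ B ∈ F, #{i | B i ≠ 0} ≤ k := fun B hB ↦
    hsum B hB ▸ card_filter_ne_zero_le_sum B
  refine ⟨G.biUnion fun A ↦ {i | A i ≠ 0}, ?_, fun B hB ↦
    lt_sum_of_lowerBounds_sum_lt hint hGF ⟨A, hAG⟩ ?_ (fun T hT ↦ hFt T (hGlow hT)) hB⟩
  · calc #(G.biUnion fun A ↦ {i | A i ≠ 0}) ≤ ∑ A ∈ G, #{i | A i ≠ 0} := card_biUnion_le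
      _ ≤ #G * k := sum_le_card_nsmul _ _ _ fun B hB ↦ hsupp B (hGF hB)
      _ ≤ k * (k + 1) := by
        rw [mul_comm]
        exact Nat.mul_le_mul_left k (hGcard.trans (Nat.add_le_add_right (hsupp A hA) 1))
  · intro A' hA' i hi
    by_contra h
    exact hi (mem_biUnion.2 ⟨A', hA', mem_filter.2 ⟨mem_univ i, h⟩⟩)

theorem EKR_multiset_large_n_general (k t : ℕ) (htk : t ≤ k) :
    ∃ n₀ : ℕ, ∀ n : ℕ, n₀ ≤ n → ∀ F : Finset (Fin n → ℕ),
      (∀ A ∈ F, ∑ i, A i = k) →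
      (∀ A ∈ F, ∀ B ∈ F, t ≤ ∑ i, min (A i) (B i)) →
      F.card ≤ (n + k - t - 1).choose (k - t) := by
  refine ⟨(k + 1) ^ (k * (k + 1)) * k + 1, fun n hn F hsum hint ↦ ?_⟩
  by_cases htriv : ∃ T ∈ lowerBounds (F : Set (Fin n → ℕ)), t ≤ ∑ i, T i
  · obtain ⟨T, hT, htT⟩ := htriv
    simpa using card_le_choose_of_mem_lowerBounds (by simp; omega) htk hsum hT htT
  push Not at htriv
  obtain rfl | hF := F.eq_empty_or_nonempty
  · simp
  obtain ⟨S, hS, hSF⟩ := exists_card_le_forall_lt_sum hsum hint hF htriv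
  obtain ⟨A, hA⟩ := hF
  obtain ⟨j, hj⟩ : ∃ j, k - t = j + 1 := by
    have hAS : ∑ i ∈ S, A i ≤ k :=
      (sum_le_univ_sum_of_nonneg fun _ ↦ Nat.zero_le _).trans_eq (hsum A hA)
    exact ⟨k - t - 1, by have := hSF A hA; omega⟩
  calc #F ≤ (k + 1) ^ #S * (n + j).choose j := by
        simpa [hj] using card_le_pow_mul_choose_of_lt_sum hsum hSF
    _ ≤ (k + 1) ^ (k * (k + 1)) * (n + j).choose j :=
        Nat.mul_le_mul_right _ (Nat.pow_le_pow_right k.succ_pos hS)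
    _ ≤ (n + j).choose (j + 1) := Nat.mul_choose_le_choose_succ
        ((Nat.mul_le_mul_left _ (show j + 1 ≤ k by omega)).trans (by omega))
    _ = (n + k - t - 1).choose (k - t) := by rw [← hj]; congr 1; omega

/-- For `n` large enough, every t-intersecting family of k-multisets of [n]
has size at most `(n + k - t - 1).choose (k - t)`. -/
theorem EKR_multiset_large_n (k t : ℕ) (ht : 1 ≤ t) (htk : t ≤ k) :
    ∃ n₀ : ℕ, ∀ n : ℕ, n₀ ≤ n → ∀ F : Finset (Fin n → ℕ),
      (∀ A ∈ F, ∑ i, A i = k) →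
      (∀ A ∈ F, ∀ B ∈ F, t ≤ ∑ i, min (A i) (B i)) →
      F.card ≤ (n + k - t - 1).choose (k - t) :=
  EKR_multiset_large_n_general k t htk
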